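/- Among all nonnegative edge-weight assignments b on the complete graph K_n summing to 1 for which the weighted graph is connected, the assignment that places weight 1/(n−1) on each edge incident to a fixed vertex k and weight 0 elsewhere minimizes the vulnerability measure M̂_k(b) = L(b)†_{kk}. -/

import Mathlib

/-!
Write `M(B) = L(B) + 𝟙𝟙ᵀ/n`. Its quadratic form is
`xᵀ M(B) x = ½ ∑ᵢⱼ Bᵢⱼ (xᵢ - xⱼ)² + (∑ᵢ xᵢ)² / n`, so `M(B)` is positive definite when the graph
of `B` is connected, and then `M(B)⁻¹ₖₖ ≥ 2 xₖ - xᵀ M(B) x` for every `x`, with equality at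
`x = M(B)⁻¹ eₖ`. For the star this column is `x = 𝟙/n² + ((n-1)/n) eₖ`. Every difference
`xᵢ - xⱼ` is `0` or `±(n-1)/n`, so for any `B` of total weight one
`xᵀ M(B) x ≤ ((n-1)/n)² + 1/n = xₖ`, whence `M(B)⁻¹ₖₖ ≥ xₖ = M(star)⁻¹ₖₖ`.
-/

def lapMat {n : ℕ} (B : Matrix (Fin n) (Fin n) ℝ) : Matrix (Fin n) (Fin n) ℝ :=
  Matrix.of fun i j => if i = j then ∑ k, B i k else -B i j

noncomputable def Jmat (n : ℕ) : Matrix (Fin n) (Fin n) ℝ := Matrix.of fun _ _ => (n : ℝ)⁻¹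

/-- `M̂ₖ(B) = L(B)†ₖₖ`, via `L† = (L + 𝟙𝟙ᵀ/n)⁻¹ − 𝟙𝟙ᵀ/n` (valid on connected graphs). -/
noncomputable def MhatB {n : ℕ} (k : Fin n) (B : Matrix (Fin n) (Fin n) ℝ) : ℝ :=
  (lapMat B + Jmat n)⁻¹ k k - (n : ℝ)⁻¹

/-- The uniform star centered at `k`: weight `1/(n−1)` on each edge incident to `k`,
weight `0` on every other edge of `Kₙ`. -/
noncomputable def starAt {n : ℕ} (k : Fin n) : Matrix (Fin n) (Fin n) ℝ :=
  Matrix.of fun i j => if i ≠ j ∧ (i = k ∨ j = k) then ((n : ℝ) - 1)⁻¹ else 0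

open Finset Matrix

lemma SimpleGraph.Reachable.apply_eq_of_forall_adj {V β : Type*} {G : SimpleGraph V} {f : V → β}
    (hf : ∀ a b, G.Adj a b → f a = f b) {u v : V} (huv : G.Reachable u v) : f u = f v := by
  obtain ⟨w⟩ := huv
  induction w with
  | nil => rfl
  | cons hadj _ ih => exact (hf _ _ hadj).trans ih

namespace Matrix

variable {ι : Type*} [Fintype ι] [DecidableEq ι]

lemma inv_apply_eq_of_mulVec_eq_single {M : Matrix ι ι ℝ} (hM : IsUnit M) {x : ι → ℝ} {k : ι}
    (hx : M *ᵥ x = Pi.single k 1) (i : ι) : M⁻¹ i k = x i := by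
  have := hM.invertible
  simpa using congrFun (inv_mulVec_eq_vec hx.symm) i

lemma PosDef.two_mul_sub_dotProduct_mulVec_le_inv_apply_self {M : Matrix ι ι ℝ} (hM : M.PosDef)
    (x : ι → ℝ) (k : ι) : 2 * x k - x ⬝ᵥ (M *ᵥ x) ≤ M⁻¹ k k := by
  have := hM.isUnit.invertible
  set y := M⁻¹ *ᵥ Pi.single k 1
  have hMy : M *ᵥ y = Pi.single k 1 := by
    rw [mulVec_mulVec, mul_inv_of_invertible, one_mulVec]
  have hMt : Mᵀ = M := isHermitian_iff_isSymm.mp hM.isHermitian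
  have hyMx : y ⬝ᵥ (M *ᵥ x) = x k := by
    rw [dotProduct_mulVec, ← mulVec_transpose, hMt, hMy, single_dotProduct, one_mul]
  have hxMy : x ⬝ᵥ (M *ᵥ y) = x k := by rw [hMy, dotProduct_single, mul_one]
  have hyMy : y ⬝ᵥ (M *ᵥ y) = M⁻¹ k k := by
    rw [hMy, dotProduct_single, mul_one]; simp [y]
  have hnonneg := hM.posSemidef.dotProduct_mulVec_nonneg (x - y)
  rw [star_trivial, mulVec_sub, sub_dotProduct, dotProduct_sub, dotProduct_sub,
    hyMx, hxMy, hyMy] at hnonneg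
  linarith

end Matrix

section Laplacian

variable {n : ℕ} {B : Matrix (Fin n) (Fin n) ℝ}

lemma lapMat_mulVec_apply (hdiag : ∀ i, B i i = 0) (x : Fin n → ℝ) (i : Fin n) :
    (lapMat B *ᵥ x) i = ∑ j, B i j * (x i - x j) := by
  have hrow : ∀ j, lapMat B i j = (Pi.single i (∑ m, B i m) : Fin n → ℝ) j - B i j := by
    intro j
    rcases eq_or_ne j i with rfl | hji
    · simp [lapMat, hdiag]
    · simp [lapMat, hji, hji.symm]
  simp only [mulVec, dotProduct, hrow, sub_mul, sum_sub_distrib, mul_sub, Pi.single_apply,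
    ite_mul, zero_mul, sum_ite_eq', mem_univ, if_true, sum_mul]

lemma Jmat_mulVec_apply (x : Fin n → ℝ) (i : Fin n) :
    (Jmat n *ᵥ x) i = (∑ j, x j) / n := by
  simp [Jmat, mulVec, dotProduct, ← mul_sum, div_eq_inv_mul]

lemma dotProduct_lapMat_mulVec (hsym : B.IsSymm) (hdiag : ∀ i, B i i = 0) (x : Fin n → ℝ) :
    x ⬝ᵥ (lapMat B *ᵥ x) = (∑ i, ∑ j, B i j * (x i - x j) ^ 2) / 2 := by
  have hS : x ⬝ᵥ (lapMat B *ᵥ x) = ∑ i, ∑ j, B i j * (x i * (x i - x j)) := by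
    simp only [dotProduct, lapMat_mulVec_apply hdiag, mul_sum]
    exact sum_congr rfl fun i _ => sum_congr rfl fun j _ => by ring
  have hswap : x ⬝ᵥ (lapMat B *ᵥ x) = ∑ i, ∑ j, B i j * (x j * (x j - x i)) := by
    rw [hS, sum_comm]
    simp only [hsym.apply]
  have hsq : ∑ i, ∑ j, B i j * (x i - x j) ^ 2
      = ∑ i, ∑ j, B i j * (x i * (x i - x j)) + ∑ i, ∑ j, B i j * (x j * (x j - x i)) := by
    rw [← sum_add_distrib]
    exact sum_congr rfl fun i _ => by rw [← sum_add_distrib]; exact sum_congr rfl fun j _ => by ring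
  linarith

lemma dotProduct_Jmat_mulVec (x : Fin n → ℝ) : x ⬝ᵥ (Jmat n *ᵥ x) = (∑ i, x i) ^ 2 / n := by
  simp only [dotProduct, Jmat_mulVec_apply, ← sum_mul, sq, mul_div_assoc]

lemma dotProduct_lapMat_add_Jmat_mulVec (hsym : B.IsSymm) (hdiag : ∀ i, B i i = 0)
    (x : Fin n → ℝ) : x ⬝ᵥ ((lapMat B + Jmat n) *ᵥ x)
      = (∑ i, ∑ j, B i j * (x i - x j) ^ 2) / 2 + (∑ i, x i) ^ 2 / n := by
  rw [add_mulVec, dotProduct_add, dotProduct_lapMat_mulVec hsym hdiag, dotProduct_Jmat_mulVec]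

lemma lapMat_isSymm (hsym : B.IsSymm) : (lapMat B).IsSymm := by
  refine IsSymm.ext fun i j => ?_
  rcases eq_or_ne i j with rfl | hij
  · rfl
  · simp [lapMat, hij, hij.symm, hsym.apply]

lemma Jmat_isSymm : (Jmat n).IsSymm := IsSymm.ext fun _ _ => rfl

lemma apply_eq_of_sum_mul_sub_sq_eq_zero (hnonneg : ∀ i j, 0 ≤ B i j)
    (hconn : (SimpleGraph.fromRel fun i j => 0 < B i j).Connected) {x : Fin n → ℝ}
    (h : ∑ i, ∑ j, B i j * (x i - x j) ^ 2 = 0) (i j : Fin n) : x i = x j := by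
  have hterm_nonneg : ∀ i j, 0 ≤ B i j * (x i - x j) ^ 2 := fun i j =>
    mul_nonneg (hnonneg i j) (sq_nonneg _)
  have hterm : ∀ i j, B i j * (x i - x j) ^ 2 = 0 := fun i j =>
    (sum_eq_zero_iff_of_nonneg fun j _ => hterm_nonneg i j).mp
      ((sum_eq_zero_iff_of_nonneg fun i _ => sum_nonneg fun j _ => hterm_nonneg i j).mp h i
        (mem_univ i)) j (mem_univ j)
  have hedge : ∀ a b, 0 < B a b → x a = x b := fun a b hab =>
    sub_eq_zero.mp (pow_eq_zero_iff two_ne_zero |>.mp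
      ((mul_eq_zero.mp (hterm a b)).resolve_left hab.ne'))
  refine (hconn.preconnected i j).apply_eq_of_forall_adj fun a b hadj => ?_
  rcases (SimpleGraph.fromRel_adj _ a b).mp hadj |>.2 with hab | hba
  · exact hedge a b hab
  · exact (hedge b a hba).symm

lemma posDef_lapMat_add_Jmat (hsym : B.IsSymm) (hnonneg : ∀ i j, 0 ≤ B i j)
    (hdiag : ∀ i, B i i = 0) (hconn : (SimpleGraph.fromRel fun i j => 0 < B i j).Connected) :
    (lapMat B + Jmat n).PosDef := by
  refine PosDef.of_dotProduct_mulVec_pos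
    (isHermitian_iff_isSymm.mpr ((lapMat_isSymm hsym).add Jmat_isSymm)) fun x hx => ?_
  rw [star_trivial, dotProduct_lapMat_add_Jmat_mulVec hsym hdiag]
  have hE : 0 ≤ ∑ i, ∑ j, B i j * (x i - x j) ^ 2 :=
    sum_nonneg fun i _ => sum_nonneg fun j _ => mul_nonneg (hnonneg i j) (sq_nonneg _)
  have hJ : 0 ≤ (∑ i, x i) ^ 2 / n := by positivity
  refine lt_of_le_of_ne (by linarith) fun hzero => hx ?_
  have hconst := apply_eq_of_sum_mul_sub_sq_eq_zero hnonneg hconn (x := x) (by linarith)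
  obtain ⟨i₀⟩ := hconn.nonempty
  have hn : (n : ℝ) ≠ 0 := by exact_mod_cast (Fin.pos i₀).ne'
  have hsum : ∑ i, x i = n * x i₀ := by simp [hconst _ i₀]
  have hx₀ : x i₀ = 0 := by
    have : (∑ i, x i) ^ 2 / n = 0 := by linarith
    simpa [hsum, hn] using this
  exact funext fun i => (hconst i i₀).trans hx₀

end Laplacian

lemma natCast_sub_one_pos {n : ℕ} (hn : 2 ≤ n) : (0 : ℝ) < n - 1 := by
  have : (2 : ℝ) ≤ n := by exact_mod_cast hn
  linarith

section Star

variable {n : ℕ} (k : Fin n)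

lemma starAt_isSymm : (starAt k).IsSymm :=
  IsSymm.ext fun i j => by simp only [starAt, of_apply, ne_comm, or_comm]

lemma starAt_nonneg (i j : Fin n) : 0 ≤ starAt k i j := by
  have hn : (1 : ℝ) ≤ n := by exact_mod_cast Fin.pos k
  simp only [starAt, of_apply]
  split_ifs
  · exact inv_nonneg.mpr (by linarith)
  · rfl

lemma starAt_self (i : Fin n) : starAt k i i = 0 := by simp [starAt]

lemma starAt_center_apply (j : Fin n) :
    starAt k k j = if j = k then 0 else ((n : ℝ) - 1)⁻¹ := by
  rcases eq_or_ne j k with rfl | hj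
  · simp [starAt]
  · simp [starAt, hj, hj.symm]

lemma starAt_apply_of_ne {i : Fin n} (hi : i ≠ k) (j : Fin n) :
    starAt k i j = if j = k then ((n : ℝ) - 1)⁻¹ else 0 := by
  rcases eq_or_ne j k with rfl | hj
  · simp [starAt, hi]
  · simp [starAt, hi, hj]

lemma sum_starAt_center (hn : 2 ≤ n) : ∑ j, starAt k k j = 1 := by
  have hn1 := (natCast_sub_one_pos hn).ne'
  simp [starAt_center_apply, sum_ite, filter_ne', Nat.cast_sub (by omega : 1 ≤ n), hn1]

lemma sum_starAt_of_ne {i : Fin n} (hi : i ≠ k) : ∑ j, starAt k i j = ((n : ℝ) - 1)⁻¹ := by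
  simp [starAt_apply_of_ne k hi]

lemma sum_sum_starAt (hn : 2 ≤ n) : ∑ i, ∑ j, starAt k i j = 2 := by
  have hn1 := (natCast_sub_one_pos hn).ne'
  rw [← add_sum_erase _ _ (mem_univ k), sum_starAt_center k hn,
    sum_congr rfl fun i hi => sum_starAt_of_ne k (ne_of_mem_erase hi)]
  norm_num [card_erase_of_mem, Nat.cast_sub (by omega : 1 ≤ n), hn1]

lemma starAt_connected (hn : 2 ≤ n) :
    (SimpleGraph.fromRel fun i j => 0 < starAt k i j).Connected := by
  have hpos : (0 : ℝ) < ((n : ℝ) - 1)⁻¹ := inv_pos.mpr (natCast_sub_one_pos hn)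
  have hreach : ∀ i, (SimpleGraph.fromRel fun i j => 0 < starAt k i j).Reachable i k := by
    intro i
    rcases eq_or_ne i k with rfl | hi
    · rfl
    · refine SimpleGraph.Adj.reachable ((SimpleGraph.fromRel_adj _ _ _).mpr ⟨hi, Or.inl ?_⟩)
      simpa [starAt_apply_of_ne k hi] using hpos
  exact SimpleGraph.connected_iff_exists_forall_reachable _ |>.mpr ⟨k, fun i => (hreach i).symm⟩

noncomputable def starPotential : Fin n → ℝ :=
  fun i => ((n : ℝ) ^ 2)⁻¹ + if i = k then ((n : ℝ) - 1) / n else 0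

lemma sum_starPotential : ∑ i, starPotential k i = 1 := by
  have hn : (n : ℝ) ≠ 0 := by exact_mod_cast (Fin.pos k).ne'
  simp only [starPotential, sum_add_distrib, sum_const, card_univ, Fintype.card_fin, nsmul_eq_mul,
    sum_ite_eq', mem_univ, if_true]
  field_simp
  ring

lemma starPotential_sub (i j : Fin n) : starPotential k i - starPotential k j
    = (if i = k then ((n : ℝ) - 1) / n else 0) - (if j = k then ((n : ℝ) - 1) / n else 0) := by
  simp only [starPotential]
  ring

lemma starPotential_self : starPotential k k = (((n : ℝ) - 1) / n) ^ 2 + (n : ℝ)⁻¹ := by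
  have hn : (n : ℝ) ≠ 0 := by exact_mod_cast (Fin.pos k).ne'
  simp only [starPotential, if_true]
  field_simp
  ring

lemma lapMat_starAt_add_Jmat_mulVec_starPotential (hn : 2 ≤ n) :
    (lapMat (starAt k) + Jmat n) *ᵥ starPotential k = Pi.single k 1 := by
  have hn0 : (n : ℝ) ≠ 0 := by positivity
  have hn1 := (natCast_sub_one_pos hn).ne'
  ext i
  rw [add_mulVec, Pi.add_apply, lapMat_mulVec_apply (starAt_self k), Jmat_mulVec_apply,
    sum_starPotential]
  rcases eq_or_ne i k with rfl | hi
  · have hrow : ∀ j, starAt i i j * (starPotential i i - starPotential i j)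
        = starAt i i j * (((n : ℝ) - 1) / n) := by
      intro j
      rcases eq_or_ne j i with rfl | hj
      · simp [starAt_self]
      · simp [starPotential_sub, hj]
    rw [sum_congr rfl fun j _ => hrow j, ← sum_mul, sum_starAt_center i hn]
    rw [Pi.single_eq_same]
    field_simp
    ring
  · simp only [starAt_apply_of_ne k hi, ite_mul, zero_mul, sum_ite_eq', mem_univ, if_true,
      starPotential_sub, if_neg hi, Pi.single_eq_of_ne hi]
    field_simp
    ring

lemma sq_starPotential_sub_le (i j : Fin n) :
    (starPotential k i - starPotential k j) ^ 2 ≤ (((n : ℝ) - 1) / n) ^ 2 := by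
  rw [starPotential_sub]
  split_ifs <;> simp [sq_nonneg]

lemma dotProduct_mulVec_starPotential_le {B : Matrix (Fin n) (Fin n) ℝ} (hsym : B.IsSymm)
    (hnonneg : ∀ i j, 0 ≤ B i j) (hdiag : ∀ i, B i i = 0) (hsum : ∑ i, ∑ j, B i j = 2) :
    starPotential k ⬝ᵥ ((lapMat B + Jmat n) *ᵥ starPotential k)
      ≤ (((n : ℝ) - 1) / n) ^ 2 + (n : ℝ)⁻¹ := by
  rw [dotProduct_lapMat_add_Jmat_mulVec hsym hdiag, sum_starPotential]
  have hedges : ∑ i, ∑ j, B i j * (starPotential k i - starPotential k j) ^ 2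
      ≤ ∑ i, ∑ j, B i j * (((n : ℝ) - 1) / n) ^ 2 :=
    sum_le_sum fun i _ => sum_le_sum fun j _ =>
      mul_le_mul_of_nonneg_left (sq_starPotential_sub_le k i j) (hnonneg i j)
  have htotal : ∑ i, ∑ j, B i j * (((n : ℝ) - 1) / n) ^ 2 = 2 * (((n : ℝ) - 1) / n) ^ 2 := by
    simp only [← sum_mul, hsum]
  rw [one_pow, one_div]
  linarith

end Star

/-- among all nonnegative symmetric edge-weight assignments on the complete
graph `Kₙ` summing to `1` (i.e. `∑ᵢ∑ⱼ Bᵢⱼ = 2`) for which the weighted graph is connected,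
the uniform star centered at the fixed vertex `k` minimizes the vulnerability measure
`M̂ₖ(B) = L(B)†ₖₖ`. -/
theorem stmt12 {n : ℕ} (hn : 2 ≤ n) (k : Fin n) :
    (starAt k).IsSymm ∧ (∀ i j, 0 ≤ starAt k i j) ∧ (∑ i, ∑ j, starAt k i j = 2) ∧
    (SimpleGraph.fromRel (fun i j => 0 < starAt k i j)).Connected ∧
    ∀ B : Matrix (Fin n) (Fin n) ℝ,
      B.IsSymm → (∀ i j, 0 ≤ B i j) → (∀ i, B i i = 0) → (∑ i, ∑ j, B i j = 2) →
      (SimpleGraph.fromRel (fun i j => 0 < B i j)).Connected →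
      MhatB k (starAt k) ≤ MhatB k B := by
  refine ⟨starAt_isSymm k, starAt_nonneg k, sum_sum_starAt k hn, starAt_connected k hn, ?_⟩
  intro B hsym hnonneg hdiag hsum hconn
  have hstar : (lapMat (starAt k) + Jmat n)⁻¹ k k = starPotential k k :=
    inv_apply_eq_of_mulVec_eq_single
      (posDef_lapMat_add_Jmat (starAt_isSymm k) (starAt_nonneg k) (starAt_self k)
        (starAt_connected k hn)).isUnit
      (lapMat_starAt_add_Jmat_mulVec_starPotential k hn) k
  have hB := (posDef_lapMat_add_Jmat hsym hnonneg hdiag hconn)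
    |>.two_mul_sub_dotProduct_mulVec_le_inv_apply_self (starPotential k) k
  have hQ := dotProduct_mulVec_starPotential_le k hsym hnonneg hdiag hsum
  have hk := starPotential_self k
  simp only [MhatB]
  linarith
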